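/- arXiv:2105.07304 — 2 statements merged into one kernel-verified Lean document; each statement's English description precedes it below -/
import Mathlib

section
/- Let h_1, …, h_L be positive semidefinite N×N complex matrices, H = Σ_{X=1}^L h_X, and on ℂ^N ⊗ ℂ^{L+1} (with ancilla standard basis e_0, e_1, …, e_L) define the Hermitian matrix H' = Σ_{X=1}^L √(h_X) ⊗ (|X⟩⟨0| + |0⟩⟨X|), where √(h_X) is the positive semidefinite square root of h_X and |X⟩⟨0|, |0⟩⟨X| are the matrix units e_X e_0† and e_0 e_X†. Then every nonzero eigenvalue ν of H' satisfies: ν² is an eigenvalue of H (hence ν = ±√λ for some eigenvalue λ of H). Consequently the spectral norm satisfies ‖H'‖ = √(‖H‖); in particular, if each ‖h_X‖ ≤ 1 then ‖H'‖ ≤ √L. -/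
/-!
Write a vector on `ℂ^N ⊗ ℂ^(L+1)` as `(v₀, v₁, …, v_L)`. Then
`H' v = (∑ X, √h_X v_X, √h_1 v₀, …, √h_L v₀)`, so for `ν ≠ 0` an eigenvector of `H'` is
determined by `v₀`, through `v_X = ν⁻¹ √h_X v₀`, and the eigenvalue equation becomes
`H v₀ = ν² v₀`; conversely `(ν w, √h_1 w, …, √h_L w)` is an eigenvector of `H'` for any
eigenvector `w` of `H` with eigenvalue `ν²`. Both matrices are Hermitian, so their spectral norms
are their spectral radii, and the correspondence `ν ↔ ν²` of nonzero spectra gives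
`‖H'‖ = √‖H‖`. The last claim is the triangle inequality `‖H‖ ≤ ∑ X, ‖h_X‖`.
-/

open Matrix Kronecker
open scoped ComplexOrder

/-- Spectral (ℓ²-operator) norm of a complex matrix. -/
noncomputable def specNorm {n : Type*} [Fintype n] [DecidableEq n]
    (A : Matrix n n ℂ) : ℝ :=
  ‖Matrix.toEuclideanCLM (𝕜 := ℂ) A‖

/-- The positive semidefinite square root of a positive semidefinite matrix
(the definition `Matrix.PosSemidef.sqrt` of the older Mathlib, removed since). -/
noncomputable def Matrix.PosSemidef.sqrt {n 𝕜 : Type*} [Fintype n] [RCLike 𝕜] [DecidableEq n]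
    {A : Matrix n n 𝕜} (hA : A.PosSemidef) : Matrix n n 𝕜 :=
  (hA.1.eigenvectorUnitary : Matrix n n 𝕜) *
    diagonal (fun i => ((√(hA.1.eigenvalues i) : ℝ) : 𝕜)) *
    (star hA.1.eigenvectorUnitary : Matrix n n 𝕜)

theorem IsSelfAdjoint.exists_mem_spectrum_norm_eq {A : Type*} [CStarAlgebra A] [Nontrivial A]
    {a : A} (ha : IsSelfAdjoint a) : ∃ ν ∈ spectrum ℂ a, ‖ν‖ = ‖a‖ := by
  obtain ⟨ν, hν, hνa⟩ := spectrum.exists_nnnorm_eq_spectralRadius a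
  rw [ha.spectralRadius_eq_nnnorm, ENNReal.coe_inj] at hνa
  exact ⟨ν, hν, congrArg NNReal.toReal hνa⟩

theorem IsSelfAdjoint.norm_eq_sqrt_norm_of_spectrum_sq {A B : Type*} [CStarAlgebra A]
    [CStarAlgebra B] [Nontrivial A] [Nontrivial B] {a : A} {b : B}
    (ha : IsSelfAdjoint a) (hb : IsSelfAdjoint b)
    (hab : ∀ ν : ℂ, ν ≠ 0 → (ν ∈ spectrum ℂ a ↔ ν ^ 2 ∈ spectrum ℂ b)) :
    ‖a‖ = √‖b‖ := by
  apply le_antisymm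
  · obtain ⟨ν, hν, hνa⟩ := ha.exists_mem_spectrum_norm_eq
    rcases eq_or_ne ν 0 with rfl | hν0
    · simp [← hνa]
    · rw [← hνa, ← Real.sqrt_sq (norm_nonneg ν), ← norm_pow]
      exact Real.sqrt_le_sqrt (spectrum.norm_le_norm_of_mem ((hab ν hν0).mp hν))
  · obtain ⟨μ, hμ, hμb⟩ := hb.exists_mem_spectrum_norm_eq
    obtain ⟨ν, rfl⟩ := IsAlgClosed.exists_pow_nat_eq μ two_pos
    rcases eq_or_ne ν 0 with rfl | hν0
    · simp [← hμb]
    · rw [← hμb, norm_pow, Real.sqrt_sq (norm_nonneg ν)]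
      exact spectrum.norm_le_norm_of_mem ((hab ν hν0).mpr hμ)

theorem Matrix.mem_spectrum_iff_exists_mulVec_eq_smul {K n : Type*} [Field K] [Fintype n]
    [DecidableEq n] {A : Matrix n n K} {ν : K} :
    ν ∈ spectrum K A ↔ ∃ v, v ≠ 0 ∧ A *ᵥ v = ν • v := by
  rw [← spectrum_toLin', ← Module.End.hasEigenvalue_iff_mem_spectrum]
  constructor
  · intro h
    obtain ⟨v, hv⟩ := h.exists_hasEigenvector
    exact ⟨v, hv.2, by simpa using hv.apply_eq_smul⟩
  · rintro ⟨v, hv0, hv⟩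
    exact Module.End.hasEigenvalue_of_hasEigenvector ⟨by simpa [Module.End.mem_eigenspace_iff], hv0⟩

theorem specNorm_eq_sqrt_specNorm_of_spectrum_sq {n m : Type*} [Fintype n] [DecidableEq n]
    [Fintype m] [DecidableEq m] [Nonempty n] [Nonempty m] {A : Matrix n n ℂ} {B : Matrix m m ℂ}
    (hA : A.IsHermitian) (hB : B.IsHermitian)
    (hAB : ∀ ν : ℂ, ν ≠ 0 → (ν ∈ spectrum ℂ A ↔ ν ^ 2 ∈ spectrum ℂ B)) :
    specNorm A = √(specNorm B) := by
  refine IsSelfAdjoint.norm_eq_sqrt_norm_of_spectrum_sq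
    (hA.isSelfAdjoint.map toEuclideanCLM) (hB.isSelfAdjoint.map toEuclideanCLM) fun ν hν => ?_
  simpa only [AlgEquiv.spectrum_eq] using hAB ν hν

theorem specNorm_of_isEmpty {n : Type*} [Fintype n] [DecidableEq n] [IsEmpty n]
    (A : Matrix n n ℂ) : specNorm A = 0 := by
  rw [specNorm, Subsingleton.elim A 0, map_zero, norm_zero]

theorem specNorm_sum_le {ι n : Type*} [Fintype n] [DecidableEq n] (s : Finset ι)
    (A : ι → Matrix n n ℂ) : specNorm (∑ i ∈ s, A i) ≤ ∑ i ∈ s, specNorm (A i) := by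
  simpa only [specNorm, map_sum] using norm_sum_le s fun i => toEuclideanCLM (𝕜 := ℂ) (A i)

namespace Matrix.PosSemidef

variable {n 𝕜 : Type*} [Fintype n] [DecidableEq n] [RCLike 𝕜] {A : Matrix n n 𝕜}

theorem sqrt_mul_self (hA : A.PosSemidef) : hA.sqrt * hA.sqrt = A := by
  set U : Matrix n n 𝕜 := (hA.1.eigenvectorUnitary : Matrix n n 𝕜)
  have hUU : star U * U = 1 := by simp [U]
  have hD : diagonal (fun i => ((√(hA.1.eigenvalues i) : ℝ) : 𝕜)) *
      diagonal (fun i => ((√(hA.1.eigenvalues i) : ℝ) : 𝕜)) =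
      diagonal (RCLike.ofReal ∘ hA.1.eigenvalues) := by
    rw [diagonal_mul_diagonal]
    congr 1 with i
    rw [← RCLike.ofReal_mul, Real.mul_self_sqrt (hA.eigenvalues_nonneg i)]
    rfl
  conv_rhs => rw [hA.1.spectral_theorem, Unitary.conjStarAlgAut_apply]
  calc hA.sqrt * hA.sqrt
      = U * (diagonal (fun i => ((√(hA.1.eigenvalues i) : ℝ) : 𝕜)) * (star U * U) *
          diagonal (fun i => ((√(hA.1.eigenvalues i) : ℝ) : 𝕜))) * star U := by
        simp only [sqrt, U, Matrix.mul_assoc]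
    _ = _ := by rw [hUU, Matrix.mul_one, hD]

theorem isHermitian_sqrt (hA : A.PosSemidef) : hA.sqrt.IsHermitian := by
  rw [sqrt, star_eq_conjTranspose]
  exact isHermitian_mul_mul_conjTranspose _ (isHermitian_diagonal_of_self_adjoint _ (by ext; simp))

end Matrix.PosSemidef

section GapAmplification

variable {R n : Type*} {L : ℕ}

def gapAmplified [CommSemiring R] (S : Fin L → Matrix n n R) :
    Matrix (n × Fin (L + 1)) (n × Fin (L + 1)) R :=
  ∑ X, S X ⊗ₖ (single X.succ 0 1 + single 0 X.succ 1)

theorem gapAmplified_mulVec_zero [CommSemiring R] [Fintype n] (S : Fin L → Matrix n n R)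
    (v : n × Fin (L + 1) → R) (i : n) :
    (gapAmplified S *ᵥ v) (i, 0) = ∑ X, (S X *ᵥ fun j => v (j, X.succ)) i := by
  simp only [gapAmplified, sum_mulVec, Finset.sum_apply]
  refine Finset.sum_congr rfl fun X _ => ?_
  simp [mulVec, dotProduct, single, Fintype.sum_prod_type, ite_mul]

theorem gapAmplified_mulVec_succ [CommSemiring R] [Fintype n] (S : Fin L → Matrix n n R)
    (v : n × Fin (L + 1) → R) (i : n) (X : Fin L) :
    (gapAmplified S *ᵥ v) (i, X.succ) = (S X *ᵥ fun j => v (j, 0)) i := by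
  simp only [gapAmplified, sum_mulVec, Finset.sum_apply]
  rw [Finset.sum_eq_single X]
  · simp [mulVec, dotProduct, single, Fintype.sum_prod_type, (Fin.succ_ne_zero X).symm]
  · intro Y _ hYX
    simp [mulVec, dotProduct, single, (Fin.succ_ne_zero X).symm, hYX]
  · simp

theorem isHermitian_gapAmplified [CommSemiring R] [StarRing R] (S : Fin L → Matrix n n R)
    (hS : ∀ X, (S X).IsHermitian) : (gapAmplified S).IsHermitian := by
  refine isSelfAdjoint_sum _ fun X _ => ?_
  simp [IsSelfAdjoint, star_eq_conjTranspose, conjTranspose_kronecker, (hS X).eq, add_comm]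

section Field

variable {K : Type*} [Field K] [Fintype n] {S : Fin L → Matrix n n K} {ν : K}

theorem mulVec_eq_sq_smul_of_gapAmplified_mulVec_eq_smul {v : n × Fin (L + 1) → K}
    (hv : gapAmplified S *ᵥ v = ν • v) :
    (∑ X, S X * S X) *ᵥ (fun j => v (j, 0)) = ν ^ 2 • fun j => v (j, 0) := by
  have hsucc : ∀ X, S X *ᵥ (fun j => v (j, 0)) = ν • fun j => v (j, X.succ) := fun X => by
    ext i
    simpa [gapAmplified_mulVec_succ] using congrFun hv (i, X.succ)
  have hzero : ∑ X, S X *ᵥ (fun j => v (j, X.succ)) = ν • fun j => v (j, 0) := by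
    ext i
    simpa [gapAmplified_mulVec_zero] using congrFun hv (i, 0)
  simp only [sum_mulVec, ← mulVec_mulVec, hsucc, mulVec_smul, ← Finset.smul_sum, hzero, smul_smul,
    sq]

theorem exists_gapAmplified_mulVec_eq_smul_of_mulVec_eq_sq_smul {w : n → K}
    (hw : (∑ X, S X * S X) *ᵥ w = ν ^ 2 • w) :
    ∃ v, (fun j => v (j, 0)) = ν • w ∧ gapAmplified S *ᵥ v = ν • v := by
  refine ⟨fun p => Fin.cases (ν * w p.1) (fun X => (S X *ᵥ w) p.1) p.2, rfl, ?_⟩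
  ext ⟨i, a⟩
  cases a using Fin.cases with
  | zero =>
    simp only [gapAmplified_mulVec_zero, Fin.cases_succ, mulVec_mulVec]
    rw [← Finset.sum_apply, ← sum_mulVec, hw]
    simp [sq, mul_assoc]
  | succ X =>
    simp only [gapAmplified_mulVec_succ, Fin.cases_zero]
    exact congrFun (mulVec_smul (S X) ν w) i

theorem exists_gapAmplified_eigenvector_iff (hν : ν ≠ 0) :
    (∃ v, v ≠ 0 ∧ gapAmplified S *ᵥ v = ν • v) ↔
      ∃ w, w ≠ 0 ∧ (∑ X, S X * S X) *ᵥ w = ν ^ 2 • w := by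
  constructor
  · rintro ⟨v, hv0, hv⟩
    refine ⟨fun j => v (j, 0), fun h0 => hv0 ?_,
      mulVec_eq_sq_smul_of_gapAmplified_mulVec_eq_smul hv⟩
    ext ⟨j, a⟩
    cases a using Fin.cases with
    | zero => exact congrFun h0 j
    | succ X =>
      have hX := congrFun hv (j, X.succ)
      rw [gapAmplified_mulVec_succ, h0, mulVec_zero] at hX
      simpa [hν] using hX.symm
  · rintro ⟨w, hw0, hw⟩
    obtain ⟨v, hv_zero, hv⟩ := exists_gapAmplified_mulVec_eq_smul_of_mulVec_eq_sq_smul hw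
    refine ⟨v, fun h0 => hw0 ?_, hv⟩
    have hνw : ν • w = 0 := by rw [← hv_zero, h0]; rfl
    exact (smul_eq_zero.mp hνw).resolve_left hν

end Field

end GapAmplification

/-- Nonzero eigenvalues of the gap-amplified Hamiltonian H' are ±√λ for
eigenvalues λ of H, and ‖H'‖ = √‖H‖; in particular ‖H'‖ ≤ √L when each ‖h_X‖ ≤ 1. -/
theorem gap_amplification_spectrum
    {N L : ℕ}
    (h : Fin L → Matrix (Fin N) (Fin N) ℂ)
    (hpsd : ∀ X, (h X).PosSemidef)
    (H : Matrix (Fin N) (Fin N) ℂ) (hH : H = ∑ X, h X)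
    (H' : Matrix (Fin N × Fin (L + 1)) (Fin N × Fin (L + 1)) ℂ)
    (hH' : H' = ∑ X, (hpsd X).sqrt ⊗ₖ
      (single X.succ 0 (1 : ℂ) + single 0 X.succ (1 : ℂ))) :
    (∀ ν : ℂ, ν ≠ 0 → (∃ v, v ≠ 0 ∧ H'.mulVec v = ν • v) →
      ∃ w, w ≠ 0 ∧ H.mulVec w = ν ^ 2 • w)
    ∧ specNorm H' = Real.sqrt (specNorm H)
    ∧ ((∀ X, specNorm (h X) ≤ 1) → specNorm H' ≤ Real.sqrt L) := by
  replace hH' : H' = gapAmplified fun X => (hpsd X).sqrt := hH'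
  have hH_sq : H = ∑ X, (hpsd X).sqrt * (hpsd X).sqrt := by
    rw [hH]
    exact Finset.sum_congr rfl fun X _ => ((hpsd X).sqrt_mul_self).symm
  have heig (ν : ℂ) (hν : ν ≠ 0) :
      (∃ v, v ≠ 0 ∧ H' *ᵥ v = ν • v) ↔ ∃ w, w ≠ 0 ∧ H *ᵥ w = ν ^ 2 • w := by
    rw [hH', hH_sq]
    exact exists_gapAmplified_eigenvector_iff hν
  have hnorm : specNorm H' = √(specNorm H) := by
    cases isEmpty_or_nonempty (Fin N)
    · simp only [specNorm_of_isEmpty, Real.sqrt_zero]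
    · refine specNorm_eq_sqrt_specNorm_of_spectrum_sq ?_ ?_ fun ν hν => ?_
      · rw [hH']
        exact isHermitian_gapAmplified _ fun X => (hpsd X).isHermitian_sqrt
      · rw [hH]
        exact (posSemidef_sum _ fun X _ => hpsd X).isHermitian
      · simpa only [mem_spectrum_iff_exists_mulVec_eq_smul] using heig ν hν
  refine ⟨fun ν hν => (heig ν hν).mp, hnorm, fun hle => hnorm ▸ Real.sqrt_le_sqrt ?_⟩
  calc specNorm H ≤ ∑ X, specNorm (h X) := hH ▸ specNorm_sum_le _ _
    _ ≤ ∑ _X : Fin L, 1 := Finset.sum_le_sum fun X _ => hle X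
    _ = L := by simp
end

section
/- Identify the n-fold tensor power (ℂ^d)^{⊗n} with the space V of functions (Fin n → Fin d) → ℂ. For a permutation σ of Fin n, let P_σ : V → V be the linear map (P_σ f)(x) = f(x ∘ σ). For a d×d complex matrix A, let Δ(A) : V → V denote the linear map Σ_{i ∈ Fin n} (1 ⊗ ⋯ ⊗ A ⊗ ⋯ ⊗ 1), with A acting on the i-th tensor factor and the identity elsewhere; explicitly, its matrix entries are Δ(A)_{x,y} = Σ_i [∀ j ≠ i, x(j) = y(j)] · A_{x(i), y(i)}. Then the unital ℂ-subalgebra of endomorphisms of V generated by { Δ(A) : A a d×d complex matrix } equals the commutant { T : T ∘ P_σ = P_σ ∘ T for every permutation σ of Fin n }. -/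
/-- The n-fold tensor power (ℂ^d)^{⊗n}, as functions (Fin n → Fin d) → ℂ. -/
abbrev TensorPowSpace (n d : ℕ) := (Fin n → Fin d) → ℂ

/-- The permutation action P_σ on tensor factors: (P_σ f)(x) = f(x ∘ σ). -/
def permAction (n d : ℕ) (σ : Equiv.Perm (Fin n)) :
    Module.End ℂ (TensorPowSpace n d) where
  toFun f := fun x => f (x ∘ σ)
  map_add' _ _ := rfl
  map_smul' _ _ := rfl

/-- The collective operator Δ(A) = Σ_i 1 ⊗ ⋯ ⊗ A ⊗ ⋯ ⊗ 1 (A on the i-th factor). -/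
noncomputable def collective (n d : ℕ) (A : Matrix (Fin d) (Fin d) ℂ) :
    Module.End ℂ (TensorPowSpace n d) :=
  Matrix.toLin' (Matrix.of fun x y : Fin n → Fin d =>
    ∑ i, if ∀ j, j ≠ i → x j = y j then A (x i) (y i) else 0)

/-!
Write operators as matrices indexed by `ι → κ`. A matrix commutes with every `P_σ` iff it is
invariant under simultaneously permuting the tensor factors of rows and columns, and then it is
`1/n!` times its symmetrization. Expanding in matrix units `E_{x₁y₁} ⊗ ⋯ ⊗ E_{xₙyₙ}`, it suffices
that each symmetrized product `∑_σ g_{σ 1} ⊗ ⋯ ⊗ g_{σ n}` lies in the algebra generated by the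
`Δ(A)`. By polarization such a sum is an integer combination of tensor powers `b^{⊗n}`. Finally
`b^{⊗n} = ∏ᵢ bᵢ`, with `bᵢ` acting as `b` on the `i`-th factor, is the top elementary symmetric
polynomial in the commuting `bᵢ`, hence by Newton's identities a polynomial in the power sums
`∑ᵢ (bᵢ)^m = Δ(b^m)`. Conversely every `Δ(A)` is visibly permutation invariant.
-/

open Finset Function

theorem Finset.sum_ite_subset_neg_one_pow_card_compl {ι : Type*} [Fintype ι] [DecidableEq ι]
    (t : Finset ι) :
    ∑ s : Finset ι, (if t ⊆ s then (-1 : ℤ) ^ #sᶜ else 0) = if t = univ then 1 else 0 := by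
  rw [← sum_filter]
  have : ∑ s ∈ univ.filter (t ⊆ ·), (-1 : ℤ) ^ #sᶜ = ∑ u ∈ tᶜ.powerset, (-1 : ℤ) ^ #u := by
    refine sum_nbij' compl compl ?_ ?_ ?_ ?_ ?_ <;> simp [subset_compl_comm]
  simp only [this, sum_powerset_neg_one_pow_card, compl_eq_empty_iff]

/-- Polarization, as in Ryser's formula for the permanent. -/
theorem MultilinearMap.sum_perm_apply_comp {R M N ι : Type*} [CommSemiring R] [AddCommMonoid M]
    [Module R M] [AddCommGroup N] [Module R N] [Fintype ι] [DecidableEq ι]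
    (f : MultilinearMap R (fun _ : ι => M) N) (g : ι → M) :
    ∑ σ : Equiv.Perm ι, f (g ∘ σ)
      = ∑ s : Finset ι, (-1 : ℤ) ^ #sᶜ • f (fun _ => ∑ i ∈ s, g i) := by
  have expand (s : Finset ι) : (-1 : ℤ) ^ #sᶜ • f (fun _ => ∑ i ∈ s, g i)
      = ∑ r : ι → ι, (if image r univ ⊆ s then (-1 : ℤ) ^ #sᶜ else 0) • f (g ∘ r) := by
    simp_rw [f.map_sum_finset, smul_sum, ite_smul, zero_smul, ← sum_filter]
    congr 1
    ext r
    simp [image_subset_iff]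
  simp_rw [expand]
  rw [sum_comm]
  simp_rw [← sum_smul, sum_ite_subset_neg_one_pow_card_compl, ite_smul, one_smul, zero_smul,
    ← sum_filter]
  refine sum_bij (fun σ _ => σ) (by simp) (fun _ _ _ _ => Equiv.coe_inj.mp) ?_ (fun _ _ => rfl)
  intro r hr
  have hr : r.Surjective := by simpa [eq_univ_iff_forall, Surjective] using hr
  exact ⟨Equiv.ofBijective r ⟨Finite.injective_iff_surjective.mpr hr, hr⟩, mem_univ _, rfl⟩

theorem MvPolynomial.esymm_mem_adjoin_psum {σ K : Type*} [Fintype σ] [Field K] [CharZero K]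
    (k : ℕ) : esymm σ K k ∈ Algebra.adjoin K (Set.range (psum σ K)) := by
  induction k using Nat.strong_induction_on with
  | _ k ih =>
  rcases eq_or_ne k 0 with rfl | hk
  · rw [esymm_zero]
    exact one_mem _
  have newton : (k : K) • esymm σ K k ∈ Algebra.adjoin K (Set.range (psum σ K)) := by
    rw [Nat.cast_smul_eq_nsmul, nsmul_eq_mul, mul_esymm_eq_sum]
    refine mul_mem (pow_mem (neg_mem (one_mem _)) _) (sum_mem fun a ha => ?_)
    exact mul_mem (mul_mem (pow_mem (neg_mem (one_mem _)) _) (ih _ (mem_filter.mp ha).2))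
      (Algebra.subset_adjoin ⟨a.2, rfl⟩)
  simpa [smul_smul, hk] using Subalgebra.smul_mem _ newton (k : K)⁻¹

open MvPolynomial in
theorem Finset.prod_mem_adjoin_sum_pow {ι K A : Type*} [Fintype ι] [Field K] [CharZero K]
    [CommRing A] [Algebra K A] (x : ι → A) :
    ∏ i, x i ∈ Algebra.adjoin K (Set.range fun m => ∑ i, x i ^ m) := by
  have hprod : esymm ι K (Fintype.card ι) = ∏ i, X i := by
    rw [esymm, ← card_univ, powersetCard_self, sum_singleton]
  have := (Subalgebra.mem_map (f := aeval (R := K) x)).mpr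
    ⟨_, esymm_mem_adjoin_psum (Fintype.card ι), rfl⟩
  rw [AlgHom.map_adjoin, ← Set.range_comp] at this
  simpa [hprod, psum, comp_def] using this

open scoped IsMulCommutative in
theorem Finset.noncommProd_mem_adjoin_sum_pow {ι K A : Type*} [Fintype ι] [Field K] [CharZero K]
    [Ring A] [Algebra K A] (x : ι → A) (hx : Pairwise (Commute on x)) :
    univ.noncommProd x (hx.set_pairwise _)
      ∈ Algebra.adjoin K (Set.range fun m => ∑ i, x i ^ m) := by
  let S := Algebra.adjoin K (Set.range x)
  have : IsMulCommutative S := Algebra.isMulCommutative_adjoin K <| by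
    rintro _ ⟨i, rfl⟩ _ ⟨j, rfl⟩
    rcases eq_or_ne i j with rfl | hij
    · rfl
    · exact hx hij
  let u (i : ι) : S := ⟨x i, Algebra.subset_adjoin ⟨i, rfl⟩⟩
  have hval : S.val (∏ i, u i) = univ.noncommProd x (hx.set_pairwise _) := by
    rw [← noncommProd_eq_prod]
    exact univ.map_noncommProd u _ S.val
  have := (Subalgebra.mem_map (f := S.val)).mpr ⟨_, prod_mem_adjoin_sum_pow (K := K) u, rfl⟩
  rw [AlgHom.map_adjoin, ← Set.range_comp, hval] at this
  simpa [comp_def, u] using this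

def Equiv.Perm.precomp {ι : Type*} (κ : Type*) (σ : Equiv.Perm ι) : Equiv.Perm (ι → κ) :=
  Equiv.arrowCongr σ.symm (Equiv.refl κ)

@[simp]
lemma Equiv.Perm.precomp_apply {ι κ : Type*} (σ : Equiv.Perm ι) (x : ι → κ) :
    σ.precomp κ x = x ∘ σ := rfl

namespace Matrix

lemma commute_permMatrix_iff {m R : Type*} [Fintype m] [DecidableEq m] [Semiring R]
    (M : Matrix m m R) (τ : Equiv.Perm m) :
    Commute M (τ.permMatrix R) ↔ reindex τ τ M = M := by
  rw [Commute, SemiconjBy, Equiv.Perm.permMatrix, PEquiv.mul_toMatrix_toPEquiv,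
    PEquiv.toMatrix_toPEquiv_mul]
  constructor
  · intro h
    ext x y
    simpa using congr_fun₂ h (τ.symm x) y
  · intro h
    ext x y
    simpa using congr_fun₂ h (τ x) y

section piKronecker

variable {ι κ R : Type*} [Fintype ι] [CommRing R]

private lemma prod_update_apply [DecidableEq ι] (g : ι → Matrix κ κ R) (i : ι)
    (C : Matrix κ κ R) (x y : ι → κ) :
    ∏ j, update g i C j (x j) (y j) = C (x i) (y i) * ∏ j ∈ {i}ᶜ, g j (x j) (y j) := by
  rw [Fintype.prod_eq_mul_prod_compl i, update_self]
  congr 1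
  exact prod_congr rfl fun j hj => by rw [update_of_ne (by simpa using hj)]

variable (R) in
def piKronecker : MultilinearMap R (fun _ : ι => Matrix κ κ R) (Matrix (ι → κ) (ι → κ) R) where
  toFun g := of fun x y => ∏ i, g i (x i) (y i)
  map_update_add' g i A B := by
    ext x y
    simp only [of_apply, add_apply, prod_update_apply, add_mul]
  map_update_smul' g i c A := by
    ext x y
    simp only [of_apply, smul_apply, prod_update_apply, smul_eq_mul, mul_assoc]

@[simp]
lemma piKronecker_apply (g : ι → Matrix κ κ R) (x y : ι → κ) :
    piKronecker R g x y = ∏ i, g i (x i) (y i) := rfl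

lemma piKronecker_mul [DecidableEq ι] [Fintype κ] (g h : ι → Matrix κ κ R) :
    piKronecker R (g * h) = piKronecker R g * piKronecker R h := by
  ext x z
  simp only [piKronecker_apply, Pi.mul_apply, mul_apply, prod_univ_sum, Fintype.piFinset_univ,
    prod_mul_distrib]

variable [DecidableEq κ]

lemma piKronecker_single (x y : ι → κ) :
    piKronecker R (fun i => single (x i) (y i) (1 : R)) = single x y 1 := by
  ext a b
  simp [single_apply, prod_boole, funext_iff, forall_and]

lemma piKronecker_one : piKronecker R (1 : ι → Matrix κ κ R) = 1 := by
  ext x y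
  simp [one_apply, prod_boole, funext_iff]

variable [DecidableEq ι]

lemma piKronecker_mulSingle_apply (i : ι) (A : Matrix κ κ R) (x y : ι → κ) :
    piKronecker R (Pi.mulSingle i A) x y
      = if ∀ j, j ≠ i → x j = y j then A (x i) (y i) else 0 := by
  simp [Pi.mulSingle, prod_update_apply, one_apply, prod_boole]

variable (ι κ R) in
def piKroneckerHom [Fintype κ] : (ι → Matrix κ κ R) →* Matrix (ι → κ) (ι → κ) R where
  toFun := piKronecker R
  map_one' := piKronecker_one
  map_mul' := piKronecker_mul

@[simp]
lemma piKroneckerHom_apply [Fintype κ] (g : ι → Matrix κ κ R) :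
    piKroneckerHom ι κ R g = piKronecker R g :=
  rfl

end piKronecker

variable {ι κ R : Type*} [Fintype ι] [CommRing R]

lemma reindex_precomp_piKronecker (σ : Equiv.Perm ι) (g : ι → Matrix κ κ R) :
    reindex (σ.precomp κ) (σ.precomp κ) (piKronecker R g) = piKronecker R (g ∘ σ) := by
  ext x y
  simp [Equiv.Perm.precomp, ← Equiv.prod_comp σ fun i => g i (x (σ.symm i)) (y (σ.symm i))]

variable [DecidableEq ι]

variable (κ R) in
def symmetrize : Matrix (ι → κ) (ι → κ) R →ₗ[R] Matrix (ι → κ) (ι → κ) R :=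
  ∑ σ : Equiv.Perm ι, (reindexLinearEquiv R R (σ.precomp κ) (σ.precomp κ)).toLinearMap

lemma symmetrize_apply (M : Matrix (ι → κ) (ι → κ) R) :
    symmetrize κ R M = ∑ σ : Equiv.Perm ι, reindex (σ.precomp κ) (σ.precomp κ) M := by
  simp [symmetrize]

lemma symmetrize_piKronecker (g : ι → Matrix κ κ R) :
    symmetrize κ R (piKronecker R g) = ∑ σ : Equiv.Perm ι, piKronecker R (g ∘ σ) := by
  simp only [symmetrize_apply, reindex_precomp_piKronecker]

lemma symmetrize_eq_card_smul {M : Matrix (ι → κ) (ι → κ) R}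
    (hM : ∀ σ : Equiv.Perm ι, reindex (σ.precomp κ) (σ.precomp κ) M = M) :
    symmetrize κ R M = Fintype.card (Equiv.Perm ι) • M := by
  simp [symmetrize_apply, hM]

variable [DecidableEq κ]

variable (ι) in
def collectiveMatrix (A : Matrix κ κ R) : Matrix (ι → κ) (ι → κ) R :=
  ∑ i, piKronecker R (Pi.mulSingle i A)

lemma collectiveMatrix_apply (A : Matrix κ κ R) (x y : ι → κ) :
    collectiveMatrix ι A x y = ∑ i, if ∀ j, j ≠ i → x j = y j then A (x i) (y i) else 0 := by
  simp only [collectiveMatrix, sum_apply, piKronecker_mulSingle_apply]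

lemma reindex_precomp_collectiveMatrix (σ : Equiv.Perm ι) (A : Matrix κ κ R) :
    reindex (σ.precomp κ) (σ.precomp κ) (collectiveMatrix ι A) = collectiveMatrix ι A := by
  rw [collectiveMatrix, ← coe_reindexLinearEquiv R R, map_sum]
  simp only [coe_reindexLinearEquiv, reindex_precomp_piKronecker, Pi.mulSingle_comp_equiv]
  exact σ.symm.sum_comp fun i => piKronecker R (Pi.mulSingle i A)

variable {K : Type*} [Fintype κ] [Field K] [CharZero K]

lemma piKronecker_const_mem_adjoin (b : Matrix κ κ K) :
    piKronecker K (fun _ : ι => b) ∈ Algebra.adjoin K (Set.range (collectiveMatrix ι)) := by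
  have hcomm : Pairwise (Commute on fun i => piKronecker K (Pi.mulSingle i b)) := fun i j hij =>
    (Pi.mulSingle_commute (f := fun _ : ι => Matrix κ κ K) hij b b).map (piKroneckerHom ι κ K)
  have hprod : univ.noncommProd (fun i => piKronecker K (Pi.mulSingle i b)) (hcomm.set_pairwise _)
      = piKronecker K (fun _ => b) := by
    rw [← noncommProd_mulSingle (fun _ : ι => b)]
    exact (map_noncommProd _ _ _ (piKroneckerHom ι κ K)).symm
  have hpow (m : ℕ) :
      ∑ i, piKronecker K (Pi.mulSingle i b) ^ m = collectiveMatrix ι (b ^ m) := by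
    simp [collectiveMatrix, ← piKroneckerHom_apply, ← map_pow, Pi.mulSingle_pow]
  rw [← hprod]
  refine Algebra.adjoin_mono ?_ (noncommProd_mem_adjoin_sum_pow _ hcomm)
  rintro _ ⟨m, rfl⟩
  exact ⟨b ^ m, (hpow m).symm⟩

lemma sum_perm_piKronecker_mem_adjoin (g : ι → Matrix κ κ K) :
    ∑ σ : Equiv.Perm ι, piKronecker K (g ∘ σ)
      ∈ Algebra.adjoin K (Set.range (collectiveMatrix ι)) := by
  rw [(piKronecker K).sum_perm_apply_comp]
  exact sum_mem fun s _ => zsmul_mem (piKronecker_const_mem_adjoin _) _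

lemma symmetrize_mem_adjoin (M : Matrix (ι → κ) (ι → κ) K) :
    symmetrize κ K M ∈ Algebra.adjoin K (Set.range (collectiveMatrix ι)) := by
  rw [matrix_eq_sum_single M]
  simp_rw [map_sum]
  refine sum_mem fun x _ => sum_mem fun y _ => ?_
  rw [← mul_one (M x y), ← smul_eq_mul, ← smul_single, ← piKronecker_single, map_smul,
    symmetrize_piKronecker]
  exact Subalgebra.smul_mem _ (sum_perm_piKronecker_mem_adjoin _) _

theorem adjoin_range_collectiveMatrix_eq_centralizer :
    Algebra.adjoin K (Set.range (collectiveMatrix ι (κ := κ) (R := K)))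
      = Subalgebra.centralizer K
          (Set.range fun σ : Equiv.Perm ι => (σ.precomp κ).permMatrix K) := by
  apply le_antisymm
  · rw [Algebra.adjoin_le_iff]
    rintro _ ⟨A, rfl⟩
    rw [SetLike.mem_coe, Subalgebra.mem_centralizer_iff]
    rintro _ ⟨σ, rfl⟩
    exact ((commute_permMatrix_iff _ _).mpr (reindex_precomp_collectiveMatrix σ A)).symm
  · intro M hM
    have hinv (σ : Equiv.Perm ι) : reindex (σ.precomp κ) (σ.precomp κ) M = M :=
      (commute_permMatrix_iff _ _).mp ((Subalgebra.mem_centralizer_iff K).mp hM _ ⟨σ, rfl⟩).symm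
    have hcard : (Fintype.card (Equiv.Perm ι) : K) ≠ 0 :=
      Nat.cast_ne_zero.mpr Fintype.card_ne_zero
    have hM : M = (Fintype.card (Equiv.Perm ι) : K)⁻¹ • symmetrize κ K M := by
      rw [symmetrize_eq_card_smul hinv, ← Nat.cast_smul_eq_nsmul K, smul_smul,
        inv_mul_cancel₀ hcard, one_smul]
    rw [hM]
    exact Subalgebra.smul_mem _ (symmetrize_mem_adjoin M) _

end Matrix

open Matrix in
/-- The algebra generated by the collective operators Δ(A) is exactly the
commutant of the permutation action on tensor factors. -/
theorem collective_operators_generate_commutant (n d : ℕ) :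
    (Algebra.adjoin ℂ
        {S : Module.End ℂ (TensorPowSpace n d) |
          ∃ A : Matrix (Fin d) (Fin d) ℂ, S = collective n d A}
      : Set (Module.End ℂ (TensorPowSpace n d)))
    = {T : Module.End ℂ (TensorPowSpace n d) |
        ∀ σ : Equiv.Perm (Fin n),
          T * permAction n d σ = permAction n d σ * T} := by
  let e : Matrix (Fin n → Fin d) (Fin n → Fin d) ℂ ≃ₐ[ℂ] Module.End ℂ (TensorPowSpace n d) :=
    toLinAlgEquiv'
  have hcollective (A : Matrix (Fin d) (Fin d) ℂ) :
      collective n d A = e (collectiveMatrix (Fin n) A) :=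
    -- `congr!` reconciles the `Decidable` instances of the two `if`s
    congrArg toLin' <| Matrix.ext fun x y => by
      simp only [of_apply, collectiveMatrix_apply]
      congr!
  have hperm (σ : Equiv.Perm (Fin n)) :
      permAction n d σ = e ((σ.precomp (Fin d)).permMatrix ℂ) := by
    ext f x
    simp [e, permAction, Pi.single_apply]
  have hgens : {S | ∃ A, S = collective n d A}
      = e.toAlgHom '' Set.range (collectiveMatrix (Fin n)) := by
    ext
    simp [hcollective, eq_comm]
  rw [hgens, ← AlgHom.map_adjoin, adjoin_range_collectiveMatrix_eq_centralizer]
  ext T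
  obtain ⟨M, rfl⟩ := e.surjective T
  simp [hperm, ← map_mul, Set.mem_centralizer_iff, eq_comm]
end
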